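/- arXiv:2001.06906 — 2 statements merged into one kernel-verified Lean document; each statement's English description precedes it below -/
import Mathlib

section
/- Let m < M be real numbers, let f : [m, M] → ℝ be a continuous monotone increasing P-class function, and let C be a bounded self-adjoint operator on a complex Hilbert space H with mI ≤ C ≤ MI. Let x ∈ H and u ∈ ℝ satisfy 0 < ⟨x, x⟩ < u, let a ∈ [m, M] satisfy ⟨Cx, x⟩ / ⟨x, x⟩ ≤ a, and suppose (ua − ⟨Cx, x⟩)/(u − ⟨x, x⟩) ∈ [m, M]. Then f((ua − ⟨Cx, x⟩)/(u − ⟨x, x⟩)) ≥ f(⟨Cx, x⟩ / ⟨x, x⟩) − f(a). -/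
open scoped InnerProductSpace

/-!
A P-class function is nonnegative (take `x = y` and `λ = 1`), so the right-hand side is `≥ 0`.
On the other hand `m ≤ C` bounds the Rayleigh quotient `⟨Cx, x⟩ / ⟨x, x⟩` below by `m`, so it lies
in `[m, a] ⊆ [m, M]` and monotonicity gives `f (⟨Cx, x⟩ / ⟨x, x⟩) ≤ f a`.
-/

def PClassOn (s : Set ℝ) (f : ℝ → ℝ) : Prop :=
  ∀ x ∈ s, ∀ y ∈ s, ∀ l ∈ Set.Icc (0 : ℝ) 1, f (l * x + (1 - l) * y) ≤ f x + f y

lemma PClassOn.nonneg {s : Set ℝ} {f : ℝ → ℝ} (hf : PClassOn s f) {x : ℝ} (hx : x ∈ s) :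
    0 ≤ f x := by
  have := hf x hx x hx 1 ⟨zero_le_one, le_rfl⟩
  simp only [one_mul, sub_self, zero_mul, add_zero] at this
  linarith

namespace ContinuousLinearMap

open RCLike

variable {𝕜 E : Type*} [RCLike 𝕜] [NormedAddCommGroup E] [InnerProductSpace 𝕜 E]
  [Algebra ℝ (E →L[𝕜] E)] [IsScalarTower ℝ 𝕜 (E →L[𝕜] E)]

lemma mul_re_inner_self_le_of_algebraMap_le {T : E →L[𝕜] E} {c : ℝ}
    (h : algebraMap ℝ (E →L[𝕜] E) c ≤ T) (x : E) :
    c * re ⟪x, x⟫_𝕜 ≤ re ⟪T x, x⟫_𝕜 := by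
  have hpos := ((le_def _ _).mp h).re_inner_nonneg_left x
  rw [sub_apply, inner_sub_left, map_sub, Algebra.algebraMap_eq_smul_one,
    ← algebraMap_smul 𝕜 c (1 : E →L[𝕜] E), smul_apply, one_apply_eq_self, inner_smul_left,
    algebraMap_eq_ofReal, conj_ofReal, re_ofReal_mul] at hpos
  linarith

lemma le_re_inner_div_of_algebraMap_le {T : E →L[𝕜] E} {c : ℝ}
    (h : algebraMap ℝ (E →L[𝕜] E) c ≤ T) {x : E} (hx : 0 < re ⟪x, x⟫_𝕜) :
    c ≤ re ⟪T x, x⟫_𝕜 / re ⟪x, x⟫_𝕜 :=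
  (le_div_iff₀ hx).2 <| by
    simpa only [mul_comm] using mul_re_inner_self_le_of_algebraMap_le h x

end ContinuousLinearMap

theorem P_class_increasing_operator_ineq_general
    {H : Type*} [NormedAddCommGroup H] [InnerProductSpace ℂ H]
    (m M : ℝ)
    (f : ℝ → ℝ)
    (hf_P : ∀ x ∈ Set.Icc m M, ∀ y ∈ Set.Icc m M, ∀ l ∈ Set.Icc (0 : ℝ) 1,
      f (l * x + (1 - l) * y) ≤ f x + f y)
    (hf_inc : MonotoneOn f (Set.Icc m M))
    (C : H →L[ℂ] H)
    (hCm : algebraMap ℝ (H →L[ℂ] H) m ≤ C)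
    (x : H) (u : ℝ) (hx : 0 < (⟪x, x⟫_ℂ).re)
    (a : ℝ) (ha : a ∈ Set.Icc m M)
    (ha' : (⟪C x, x⟫_ℂ).re / (⟪x, x⟫_ℂ).re ≤ a)
    (hmem : (u * a - (⟪C x, x⟫_ℂ).re) / (u - (⟪x, x⟫_ℂ).re) ∈ Set.Icc m M) :
    f ((⟪C x, x⟫_ℂ).re / (⟪x, x⟫_ℂ).re) - f a ≤
      f ((u * a - (⟪C x, x⟫_ℂ).re) / (u - (⟪x, x⟫_ℂ).re)) := by
  have h_quot_mem : (⟪C x, x⟫_ℂ).re / (⟪x, x⟫_ℂ).re ∈ Set.Icc m M :=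
    ⟨C.le_re_inner_div_of_algebraMap_le hCm hx, ha'.trans ha.2⟩
  have h_mono := hf_inc h_quot_mem ha ha'
  have h_nonneg := PClassOn.nonneg hf_P hmem
  linarith

/-- Corollary 2.6: for a continuous increasing P-class function `f` on `[m, M]` and a
self-adjoint operator `C` with `mI ≤ C ≤ MI`, if `0 < ⟨x, x⟩ < u`, `a ∈ [m, M]` with
`⟨Cx, x⟩/⟨x, x⟩ ≤ a` and `(ua − ⟨Cx, x⟩)/(u − ⟨x, x⟩) ∈ [m, M]`, then
`f((ua − ⟨Cx, x⟩)/(u − ⟨x, x⟩)) ≥ f(⟨Cx, x⟩/⟨x, x⟩) − f(a)`. -/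
theorem P_class_increasing_operator_ineq
    {H : Type*} [NormedAddCommGroup H] [InnerProductSpace ℂ H] [CompleteSpace H]
    (m M : ℝ) (hmM : m < M)
    (f : ℝ → ℝ) (hf_cont : ContinuousOn f (Set.Icc m M))
    (hf_P : ∀ x ∈ Set.Icc m M, ∀ y ∈ Set.Icc m M, ∀ l ∈ Set.Icc (0 : ℝ) 1,
      f (l * x + (1 - l) * y) ≤ f x + f y)
    (hf_inc : MonotoneOn f (Set.Icc m M))
    (C : H →L[ℂ] H) (hC : IsSelfAdjoint C)
    (hCm : algebraMap ℝ (H →L[ℂ] H) m ≤ C)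
    (hCM : C ≤ algebraMap ℝ (H →L[ℂ] H) M)
    (x : H) (u : ℝ) (hx : 0 < (⟪x, x⟫_ℂ).re) (hxu : (⟪x, x⟫_ℂ).re < u)
    (a : ℝ) (ha : a ∈ Set.Icc m M)
    (ha' : (⟪C x, x⟫_ℂ).re / (⟪x, x⟫_ℂ).re ≤ a)
    (hmem : (u * a - (⟪C x, x⟫_ℂ).re) / (u - (⟪x, x⟫_ℂ).re) ∈ Set.Icc m M) :
    f ((⟪C x, x⟫_ℂ).re / (⟪x, x⟫_ℂ).re) - f a ≤
      f ((u * a - (⟪C x, x⟫_ℂ).re) / (u - (⟪x, x⟫_ℂ).re)) :=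
  P_class_increasing_operator_ineq_general m M f hf_P hf_inc C hCm x u hx a ha ha' hmem
end

section
/- Let m < M be real numbers, let C₁, …, Cₙ be bounded self-adjoint operators on a complex Hilbert space H with the spectrum of each Cᵢ contained in [m, M], let x₁, …, xₙ ∈ H satisfy Σᵢ ‖xᵢ‖² = 1, and let f : [m, M] → ℝ be a continuous P-class function. Then Σᵢ ⟨f(Cᵢ)xᵢ, xᵢ⟩ ≤ f(m) + f(M). -/
/-!
A P-class function on `[m, M]` is bounded there by `f m + f M`, since every point of `[m, M]` is
a convex combination of the endpoints. Monotonicity of the continuous functional calculus turns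
this into the operator inequality `f(Cᵢ) ≤ (f m + f M) • 1`, so
`⟨f(Cᵢ)xᵢ, xᵢ⟩ ≤ (f m + f M) ‖xᵢ‖²`; summing over `i` and using `Σᵢ ‖xᵢ‖² = 1` gives the
bound.
-/

open scoped InnerProductSpace
open Set RCLike

def IsPClassOn (s : Set ℝ) (f : ℝ → ℝ) : Prop :=
  ∀ x ∈ s, ∀ y ∈ s, ∀ l ∈ Icc (0 : ℝ) 1, f (l * x + (1 - l) * y) ≤ f x + f y

theorem IsPClassOn.le_add_of_mem_Icc {f : ℝ → ℝ} {a b t : ℝ} (hf : IsPClassOn (Icc a b) f)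
    (hab : a ≤ b) (ht : t ∈ Icc a b) : f t ≤ f a + f b := by
  rw [← segment_eq_Icc hab] at ht
  obtain ⟨l, l', hl, hl', hll', rfl⟩ := ht
  obtain rfl : l' = 1 - l := by linarith
  exact hf a (left_mem_Icc.2 hab) b (right_mem_Icc.2 hab) l ⟨hl, by linarith⟩

namespace ContinuousLinearMap

theorem re_inner_le_re_inner_of_le {𝕜 E : Type*} [RCLike 𝕜] [NormedAddCommGroup E]
    [InnerProductSpace 𝕜 E] {T S : E →L[𝕜] E} (h : T ≤ S) (x : E) :
    re ⟪T x, x⟫_𝕜 ≤ re ⟪S x, x⟫_𝕜 := by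
  have := ((le_def T S).1 h).re_inner_nonneg_left x
  rw [sub_apply, inner_sub_left, map_sub] at this
  linarith

variable {H : Type*} [NormedAddCommGroup H] [InnerProductSpace ℂ H]

theorem re_inner_algebraMap_apply (r : ℝ) (x : H) :
    re ⟪algebraMap ℝ (H →L[ℂ] H) r x, x⟫_ℂ = r * ‖x‖ ^ 2 := by
  rw [Algebra.algebraMap_eq_smul_one, smul_apply, one_apply_eq_self, ← Complex.coe_smul,
    inner_smul_left]
  simp [← Complex.ofReal_pow]

theorem re_inner_cfc_le [CompleteSpace H] {a : H →L[ℂ] H} (ha : IsSelfAdjoint a)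
    {f : ℝ → ℝ} {r : ℝ} (hf : ContinuousOn f (spectrum ℝ a))
    (hfr : ∀ t ∈ spectrum ℝ a, f t ≤ r) (x : H) :
    re ⟪cfc f a x, x⟫_ℂ ≤ r * ‖x‖ ^ 2 :=
  re_inner_algebraMap_apply r x ▸ re_inner_le_re_inner_of_le (cfc_le_algebraMap f r a hfr) x

end ContinuousLinearMap

/-- Theorem 3.5: for self-adjoint operators `C₁, …, Cₙ` with spectra in `[m, M]`,
vectors `x₁, …, xₙ` with `Σᵢ ‖xᵢ‖² = 1`, and a continuous P-class function `f` on
`[m, M]`, one has `Σᵢ ⟨f(Cᵢ)xᵢ, xᵢ⟩ ≤ f(m) + f(M)`. -/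
theorem multi_P_class_upper_bound
    {H : Type*} [NormedAddCommGroup H] [InnerProductSpace ℂ H] [CompleteSpace H]
    (m M : ℝ) (hmM : m < M) (n : ℕ)
    (C : Fin n → H →L[ℂ] H) (hC : ∀ i, IsSelfAdjoint (C i))
    (hspec : ∀ i, spectrum ℝ (C i) ⊆ Set.Icc m M)
    (x : Fin n → H) (hx : ∑ i, ‖x i‖ ^ 2 = 1)
    (f : ℝ → ℝ) (hf_cont : ContinuousOn f (Set.Icc m M))
    (hf_P : ∀ x ∈ Set.Icc m M, ∀ y ∈ Set.Icc m M, ∀ l ∈ Set.Icc (0 : ℝ) 1,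
      f (l * x + (1 - l) * y) ≤ f x + f y) :
    ∑ i, (⟪(cfc f (C i)) (x i), x i⟫_ℂ).re ≤ f m + f M := by
  have hf_bound (i : Fin n) : ∀ t ∈ spectrum ℝ (C i), f t ≤ f m + f M := fun t ht =>
    IsPClassOn.le_add_of_mem_Icc hf_P hmM.le (hspec i ht)
  calc ∑ i, (⟪(cfc f (C i)) (x i), x i⟫_ℂ).re ≤ ∑ i, (f m + f M) * ‖x i‖ ^ 2 :=
        Finset.sum_le_sum fun i _ =>
          ContinuousLinearMap.re_inner_cfc_le (hC i) (hf_cont.mono (hspec i)) (hf_bound i)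
            (x i)
    _ = f m + f M := by rw [← Finset.mul_sum, hx, mul_one]
end
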